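/- Let A satisfy A𝟏=0, Ax = e_R−e_L with Ā invertible. Define B = G₂ + x xᵀ + 𝟏 yᵀ for an arbitrary vector y ∈ ℝ^{n+1}. Then BA = I + 𝟏(Ay − e_L)ᵀ; in particular BAv differs from v by a constant multiple of the ones vector for every v. -/

import Mathlib

open Matrix

noncomputable section

def onesVec (n : ℕ) : Fin (n+1) → ℝ := fun _ => 1

def gridVec (n : ℕ) : Fin (n+1) → ℝ := fun i => (i : ℝ) / n

def eL (n : ℕ) : Fin (n+1) → ℝ := fun i => if i.1 = 0 then 1 else 0

def eR (n : ℕ) : Fin (n+1) → ℝ := fun i => if i.1 = n then 1 else 0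

def interiorEmb (n : ℕ) : Fin (n-1) → Fin (n+1) :=
  fun i => ⟨i.1 + 1, by have := i.isLt; omega⟩

def centralBlock (n : ℕ) (A : Matrix (Fin (n+1)) (Fin (n+1)) ℝ) :
    Matrix (Fin (n-1)) (Fin (n-1)) ℝ :=
  A.submatrix (interiorEmb n) (interiorEmb n)

def pad (n : ℕ) (B : Matrix (Fin (n-1)) (Fin (n-1)) ℝ) :
    Matrix (Fin (n+1)) (Fin (n+1)) ℝ :=
  fun i j =>
    if hi : 0 < i.1 ∧ i.1 < n then
      if hj : 0 < j.1 ∧ j.1 < n then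
        B ⟨i.1 - 1, by omega⟩ ⟨j.1 - 1, by omega⟩
      else 0
    else 0

def G2 (n : ℕ) (A : Matrix (Fin (n+1)) (Fin (n+1)) ℝ) :
    Matrix (Fin (n+1)) (Fin (n+1)) ℝ :=
  pad n (centralBlock n A)⁻¹

def Aplus (n : ℕ) (A : Matrix (Fin (n+1)) (Fin (n+1)) ℝ) :
    Matrix (Fin (n+1)) (Fin (n+1)) ℝ :=
  (1 - ((n : ℝ) + 1)⁻¹ • vecMulVec (onesVec n) (onesVec n)) * G2 n A *
      (1 - ((n : ℝ) + 1)⁻¹ • vecMulVec (onesVec n) (onesVec n)) +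
    vecMulVec (gridVec n - (1/2 : ℝ) • onesVec n)
      (gridVec n - (1/2 : ℝ) • onesVec n)


/-!
Write `E` for the inclusion of the interior coordinates, so that `G₂ = E Ā⁻¹ Eᵀ` and
`Ā = Eᵀ A E`. The matrix `M = I - x (e_R - e_L)ᵀ - 𝟏 e_Lᵀ` has zero boundary rows
(`x₀ = 0`, `xₙ = 1`), so `E Eᵀ M = M`, and `A M = A - (e_R - e_L)(e_R - e_L)ᵀ` agrees with `A`
on the interior rows. Hence `Eᵀ A = Eᵀ A M = Ā Eᵀ M`, and `G₂ A = E Ā⁻¹ Ā Eᵀ M = M`.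
By symmetry `x xᵀ A = x (e_R - e_L)ᵀ` cancels the middle term of `M`, and `𝟏 yᵀ A = 𝟏 (A y)ᵀ`.
-/

namespace Matrix

section Semiring

variable {R ι κ : Type*} [Semiring R] [DecidableEq κ]

variable (R) in
def inclusionMatrix (f : ι → κ) : Matrix κ ι R :=
  (1 : Matrix κ κ R).submatrix id f

theorem mul_inclusionMatrix {m : Type*} [Fintype κ] (f : ι → κ) (M : Matrix m κ R) :
    M * inclusionMatrix R f = M.submatrix id f := by
  ext i k
  simp [inclusionMatrix, mul_apply, one_apply]

theorem inclusionMatrix_transpose_mul {m : Type*} [Fintype κ] (f : ι → κ) (M : Matrix κ m R) :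
    (inclusionMatrix R f)ᵀ * M = M.submatrix f id := by
  ext i k
  simp [inclusionMatrix, mul_apply, one_apply]

theorem inclusionMatrix_mul_apply_self {m : Type*} [Fintype ι] {f : ι → κ}
    (hf : f.Injective) (N : Matrix ι m R) (k : ι) (j : m) :
    (inclusionMatrix R f * N) (f k) j = N k j := by
  simp only [inclusionMatrix, mul_apply, submatrix_apply, id, one_apply]
  rw [Finset.sum_eq_single k (fun l _ hl => by rw [if_neg (hf.ne hl).symm, zero_mul])
    (by simp), if_pos rfl, one_mul]

theorem inclusionMatrix_mul_apply_of_notMem {m : Type*} [Fintype ι] {f : ι → κ}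
    (N : Matrix ι m R) {i : κ} (hi : i ∉ Set.range f) (j : m) :
    (inclusionMatrix R f * N) i j = 0 := by
  simp only [inclusionMatrix, mul_apply, submatrix_apply, id, one_apply]
  refine Finset.sum_eq_zero fun k _ => ?_
  rw [if_neg fun h => hi ⟨k, h.symm⟩, zero_mul]

theorem inclusionMatrix_mul_transpose_mul_of_rows_eq_zero {m : Type*} [Fintype ι] [Fintype κ]
    {f : ι → κ} (hf : f.Injective) {M : Matrix κ m R} (hM : ∀ i ∉ Set.range f, M i = 0) :
    inclusionMatrix R f * ((inclusionMatrix R f)ᵀ * M) = M := by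
  ext i j
  by_cases hi : i ∈ Set.range f
  · obtain ⟨k, rfl⟩ := hi
    rw [inclusionMatrix_mul_apply_self hf, inclusionMatrix_transpose_mul, submatrix_apply, id]
  · rw [inclusionMatrix_mul_apply_of_notMem _ hi, hM i hi, Pi.zero_apply]

end Semiring

theorem inclusionMatrix_mul_inv_mul_transpose_mul {R ι κ : Type*} [CommRing R] [Fintype ι]
    [DecidableEq ι] [Fintype κ] [DecidableEq κ] {f : ι → κ} (hf : f.Injective)
    {A M : Matrix κ κ R} (hA : IsUnit (A.submatrix f f).det)
    (hM : ∀ i ∉ Set.range f, M i = 0) (hAM : (A * M).submatrix f id = A.submatrix f id) :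
    inclusionMatrix R f * (A.submatrix f f)⁻¹ * (inclusionMatrix R f)ᵀ * A = M := by
  set E := inclusionMatrix R f
  have hEM : E * (Eᵀ * M) = M := inclusionMatrix_mul_transpose_mul_of_rows_eq_zero hf hM
  have hrows : Eᵀ * A = A.submatrix f f * (Eᵀ * M) :=
    calc Eᵀ * A = Eᵀ * (A * M) := by
          rw [inclusionMatrix_transpose_mul, inclusionMatrix_transpose_mul, hAM]
      _ = Eᵀ * A * (E * (Eᵀ * M)) := by rw [hEM, Matrix.mul_assoc]
      _ = A.submatrix f f * (Eᵀ * M) := by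
          rw [← Matrix.mul_assoc, inclusionMatrix_transpose_mul, mul_inclusionMatrix,
            submatrix_submatrix, Function.comp_id, Function.id_comp]
  rw [Matrix.mul_assoc _ _ A, hrows, Matrix.mul_assoc E, ← Matrix.mul_assoc _ (A.submatrix f f),
    nonsing_inv_mul _ hA, Matrix.one_mul, hEM]

theorem one_add_vecMulVec_mulVec {R m : Type*} [CommSemiring R] [Fintype m] [DecidableEq m]
    (u w v : m → R) : (1 + vecMulVec u w) *ᵥ v = v + (w ⬝ᵥ v) • u := by
  rw [add_mulVec, one_mulVec, vecMulVec_mulVec, op_smul_eq_smul]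

end Matrix

theorem interiorEmb_injective (n : ℕ) : (interiorEmb n).Injective := fun a b h =>
  Fin.ext (by simpa [interiorEmb] using congrArg Fin.val h)

theorem mem_range_interiorEmb {n : ℕ} {i : Fin (n+1)} :
    i ∈ Set.range (interiorEmb n) ↔ 0 < i.1 ∧ i.1 < n := by
  constructor
  · rintro ⟨k, rfl⟩
    simp only [interiorEmb]
    omega
  · rintro ⟨h0, hn⟩
    exact ⟨⟨i.1 - 1, by omega⟩, Fin.ext (by simp only [interiorEmb]; omega)⟩

theorem pad_eq_inclusionMatrix_mul (n : ℕ) (B : Matrix (Fin (n-1)) (Fin (n-1)) ℝ) :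
    pad n B = inclusionMatrix ℝ (interiorEmb n) * B * (inclusionMatrix ℝ (interiorEmb n))ᵀ := by
  ext i j
  rw [← transpose_transpose (inclusionMatrix ℝ (interiorEmb n) * B), ← transpose_mul,
    transpose_apply]
  by_cases hj : j ∈ Set.range (interiorEmb n)
  · obtain ⟨j', rfl⟩ := hj
    rw [inclusionMatrix_mul_apply_self (interiorEmb_injective n), transpose_apply]
    by_cases hi : i ∈ Set.range (interiorEmb n)
    · obtain ⟨i', rfl⟩ := hi
      rw [inclusionMatrix_mul_apply_self (interiorEmb_injective n)]
      simp only [pad]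
      rw [dif_pos (mem_range_interiorEmb.mp ⟨i', rfl⟩),
        dif_pos (mem_range_interiorEmb.mp ⟨j', rfl⟩)]
      rfl
    · rw [inclusionMatrix_mul_apply_of_notMem _ hi, pad, dif_neg (mem_range_interiorEmb.not.mp hi)]
  · rw [inclusionMatrix_mul_apply_of_notMem _ hj]
    rw [mem_range_interiorEmb] at hj
    simp only [pad, dif_neg hj, dite_eq_ite, ite_self]

@[simp]
theorem eL_interiorEmb (n : ℕ) (k : Fin (n-1)) : eL n (interiorEmb n k) = 0 :=
  if_neg (by simp [interiorEmb])

@[simp]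
theorem eR_interiorEmb (n : ℕ) (k : Fin (n-1)) : eR n (interiorEmb n k) = 0 :=
  if_neg (by have := k.isLt; simp only [interiorEmb]; omega)

/-- For `n ≠ 0`, the projection whose kernel is spanned by `onesVec n` and `gridVec n`. -/
def nullProjector (n : ℕ) : Matrix (Fin (n+1)) (Fin (n+1)) ℝ :=
  1 - vecMulVec (gridVec n) (eR n - eL n) - vecMulVec (onesVec n) (eL n)

theorem nullProjector_row_eq_zero {n : ℕ} {i : Fin (n+1)} (hi : i ∉ Set.range (interiorEmb n)) :
    nullProjector n i = 0 := by
  rw [mem_range_interiorEmb] at hi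
  ext j
  simp only [nullProjector, Matrix.sub_apply, vecMulVec_apply, one_apply, gridVec, onesVec, eR,
    eL, Pi.sub_apply, Pi.zero_apply]
  rcases Nat.eq_zero_or_pos i.1 with h0 | h0
  · simp only [h0, Nat.cast_zero, zero_div, zero_mul, Fin.ext_iff]
    split_ifs <;> first | omega | ring
  · have hin : i.1 = n := by omega
    simp only [hin, div_self (Nat.cast_ne_zero.mpr (by omega) : (n : ℝ) ≠ 0), one_mul, Fin.ext_iff]
    split_ifs <;> first | omega | ring

theorem mul_nullProjector {n : ℕ} {A : Matrix (Fin (n+1)) (Fin (n+1)) ℝ}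
    (h1 : A *ᵥ onesVec n = 0) (hx : A *ᵥ gridVec n = eR n - eL n) :
    A * nullProjector n = A - vecMulVec (eR n - eL n) (eR n - eL n) := by
  rw [nullProjector, Matrix.mul_sub, Matrix.mul_sub, Matrix.mul_one, mul_vecMulVec,
    mul_vecMulVec, hx, h1, zero_vecMulVec, sub_zero]

theorem G2_mul_self {n : ℕ} {A : Matrix (Fin (n+1)) (Fin (n+1)) ℝ}
    (h1 : A *ᵥ onesVec n = 0) (hx : A *ᵥ gridVec n = eR n - eL n)
    (hinv : IsUnit (centralBlock n A).det) :
    G2 n A * A = nullProjector n := by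
  rw [G2, pad_eq_inclusionMatrix_mul]
  refine inclusionMatrix_mul_inv_mul_transpose_mul (interiorEmb_injective n) hinv
    (fun i hi => nullProjector_row_eq_zero hi) ?_
  ext k j
  simp [mul_nullProjector h1 hx, vecMulVec_apply]

theorem pseudoinverse_with_filtering_general
    (n : ℕ) (A : Matrix (Fin (n+1)) (Fin (n+1)) ℝ)
    (hsym : A.IsSymm)
    (h1 : A *ᵥ onesVec n = 0)
    (hx : A *ᵥ gridVec n = eR n - eL n)
    (hinv : IsUnit (centralBlock n A).det)
    (y : Fin (n+1) → ℝ) :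
    (G2 n A + vecMulVec (gridVec n) (gridVec n) + vecMulVec (onesVec n) y) * A =
      1 + vecMulVec (onesVec n) (A *ᵥ y - eL n) ∧
    ∀ v : Fin (n+1) → ℝ, ∃ c : ℝ,
      ((G2 n A + vecMulVec (gridVec n) (gridVec n) + vecMulVec (onesVec n) y) * A) *ᵥ v
        = v + c • onesVec n := by
  have hA_vecMul : ∀ u, u ᵥ* A = A *ᵥ u := fun u => by rw [← mulVec_transpose, hsym.eq]
  have hmain : (G2 n A + vecMulVec (gridVec n) (gridVec n) + vecMulVec (onesVec n) y) * A =
      1 + vecMulVec (onesVec n) (A *ᵥ y - eL n) := by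
    rw [Matrix.add_mul, Matrix.add_mul, G2_mul_self h1 hx hinv, vecMulVec_mul, vecMulVec_mul,
      hA_vecMul, hA_vecMul, hx, nullProjector, vecMulVec_sub (onesVec n)]
    abel
  exact ⟨hmain, fun v => ⟨(A *ᵥ y - eL n) ⬝ᵥ v, by rw [hmain, one_add_vecMulVec_mulVec]⟩⟩

theorem pseudoinverse_with_filtering
    (n : ℕ) (hn : 2 ≤ n) (A : Matrix (Fin (n+1)) (Fin (n+1)) ℝ)
    (hsym : A.IsSymm)
    (h1 : A *ᵥ onesVec n = 0)
    (hx : A *ᵥ gridVec n = eR n - eL n)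
    (hinv : IsUnit (centralBlock n A).det)
    (y : Fin (n+1) → ℝ) :
    (G2 n A + vecMulVec (gridVec n) (gridVec n) + vecMulVec (onesVec n) y) * A =
      1 + vecMulVec (onesVec n) (A *ᵥ y - eL n) ∧
    ∀ v : Fin (n+1) → ℝ, ∃ c : ℝ,
      ((G2 n A + vecMulVec (gridVec n) (gridVec n) + vecMulVec (onesVec n) y) * A) *ᵥ v
        = v + c • onesVec n :=
  pseudoinverse_with_filtering_general n A hsym h1 hx hinv y
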